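/- Let v be an aperiodic infinite binary word such that liminf_{ℓ→∞} h(ℓ)/ℓ > log 2 / log 3. Then the series Φ_ℝ(v) = −∑_{i=0}^∞ 2^{d_i}/3^{i+1} converges and its sum is strictly less than −1. -/

import Mathlib

/-!
Since `v` has its `(i+1)`-st one at position `d_i`, `h(d_i + 1) = i + 1`, so the density
hypothesis gives `c d_i ≤ i + 1` eventually, for some `c > log 2 / log 3`. The terms
`2^{d_i}/3^{i+1}` are then dominated by the geometric sequence `(2^{1/c}/3)^{i+1}`, whose
ratio is `< 1`. For the bound, `d_i ≥ i` termwise and `∑ 2^i/3^{i+1} = 1`; the inequality is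
strict because an aperiodic word is not constantly `1`, so `d_j > j` for some `j`.
-/

/-- An infinite binary word is eventually periodic if for some period `p ≥ 1`
its digits satisfy `v (n+p) = v n` from some index on. -/
def EventuallyPeriodicWord (v : ℕ → Bool) : Prop :=
  ∃ p : ℕ, 0 < p ∧ ∃ N : ℕ, ∀ n ≥ N, v (n + p) = v n

/-- The position of the `i`-th `1` (0-indexed) of the infinite binary word `v`. -/
noncomputable def onePos (v : ℕ → Bool) (i : ℕ) : ℕ :=
  Nat.nth (fun n => v n = true) i

/-- The `m`-th partial sum of the series `Φ_ℝ(v) = −∑_{i} 2^{d_i}/3^{i+1}`,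
where `d_i` enumerates the positions of the `1`s of `v`. -/
noncomputable def phiPartial (v : ℕ → Bool) (m : ℕ) : ℝ :=
  -∑ i ∈ Finset.range m, (2 : ℝ) ^ onePos v i / 3 ^ (i + 1)

/-- The number of `1`s among the first `ℓ` digits of the infinite binary word `v`. -/
def heightOfPrefix (v : ℕ → Bool) (ℓ : ℕ) : ℕ :=
  ((Finset.range ℓ).filter fun k => v k = true).card

open Filter

open Real

section Word

variable {v : ℕ → Bool}

theorem infinite_setOf_of_not_eventuallyPeriodicWord (hv : ¬ EventuallyPeriodicWord v) :
    {n | v n = true}.Infinite := by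
  contrapose! hv
  obtain ⟨N, hN⟩ := hv.bddAbove
  have hfalse : ∀ n > N, v n = false := fun n hn =>
    Bool.eq_false_iff.2 fun h => absurd (hN h) (not_le.2 hn)
  exact ⟨1, one_pos, N + 1, fun n hn => by rw [hfalse n (by omega), hfalse (n + 1) (by omega)]⟩

theorem le_onePos (hinf : {n | v n = true}.Infinite) (i : ℕ) : i ≤ onePos v i :=
  (Nat.nth_strictMono hinf).le_apply

theorem exists_lt_onePos (hinf : {n | v n = true}.Infinite) (hv : ¬ EventuallyPeriodicWord v) :
    ∃ j, j < onePos v j := by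
  by_contra! h
  have htrue : ∀ n, v n = true := fun n =>
    le_antisymm (h n) (le_onePos hinf n) ▸ Nat.nth_mem_of_infinite hinf n
  exact hv ⟨1, one_pos, 0, fun n _ => by rw [htrue, htrue]⟩

theorem heightOfPrefix_onePos_succ (hinf : {n | v n = true}.Infinite) (i : ℕ) :
    heightOfPrefix v (onePos v i + 1) = i + 1 := by
  rw [heightOfPrefix, ← Nat.count_eq_card_filter_range, Nat.count_succ, onePos,
    if_pos (Nat.nth_mem_of_infinite hinf i), Nat.count_nth_of_infinite hinf]

theorem eventually_mul_onePos_le (hinf : {n | v n = true}.Infinite) {c : ℝ}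
    (hc : ∀ᶠ ℓ in atTop, c < (heightOfPrefix v ℓ : ℝ) / ℓ) :
    ∀ᶠ i in atTop, c * onePos v i ≤ i + 1 := by
  have hpos : Tendsto (fun i => onePos v i + 1) atTop atTop :=
    (tendsto_add_atTop_nat 1).comp (Nat.nth_strictMono hinf).tendsto_atTop
  filter_upwards [hpos.eventually hc] with i hi
  rw [heightOfPrefix_onePos_succ hinf, lt_div_iff₀ (by positivity)] at hi
  push_cast at hi
  nlinarith

end Word

theorem two_rpow_inv_lt_three {c : ℝ} (hc : log 2 / log 3 < c) : (2 : ℝ) ^ c⁻¹ < 3 := by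
  have hc0 : 0 < c := (div_pos (log_pos one_lt_two) (log_pos (by norm_num))).trans hc
  rw [← log_lt_log_iff (by positivity) (by norm_num), log_rpow two_pos, inv_mul_lt_iff₀ hc0]
  exact (div_lt_iff₀ (log_pos (by norm_num))).1 hc

theorem summable_two_pow_div_three_pow {d : ℕ → ℕ} {c : ℝ} (hc : log 2 / log 3 < c)
    (hd : ∀ᶠ i in atTop, c * d i ≤ i + 1) :
    Summable fun i => (2 : ℝ) ^ d i / 3 ^ (i + 1) := by
  have hc0 : 0 < c := (div_pos (log_pos one_lt_two) (log_pos (by norm_num))).trans hc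
  set r : ℝ := 2 ^ c⁻¹ / 3
  have hr : Summable fun i : ℕ => r ^ (i + 1) :=
    (summable_nat_add_iff 1).2 <| summable_geometric_of_lt_one (by positivity)
      ((div_lt_one (by norm_num)).2 (two_rpow_inv_lt_three hc))
  refine hr.of_norm_bounded_eventually ?_
  rw [Nat.cofinite_eq_atTop]
  filter_upwards [hd] with i hi
  have hexp : (d i : ℝ) ≤ c⁻¹ * (i + 1 : ℕ) := by
    rw [le_inv_mul_iff₀ hc0]; push_cast; linarith
  calc ‖(2 : ℝ) ^ d i / 3 ^ (i + 1)‖ = 2 ^ (d i : ℝ) / 3 ^ (i + 1) := by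
        rw [Real.norm_of_nonneg (by positivity), rpow_natCast]
    _ ≤ 2 ^ (c⁻¹ * (i + 1 : ℕ)) / 3 ^ (i + 1) := by
        gcongr
        · norm_num
    _ = r ^ (i + 1) := by rw [rpow_mul zero_le_two, rpow_natCast, div_pow]

theorem tsum_two_pow_div_three_pow_succ : ∑' i : ℕ, (2 : ℝ) ^ i / 3 ^ (i + 1) = 1 := by
  have h : ∀ i : ℕ, (2 : ℝ) ^ i / 3 ^ (i + 1) = 3⁻¹ * (2 / 3) ^ i := fun i => by
    rw [div_pow, pow_succ]; ring
  rw [tsum_congr h, tsum_mul_left, tsum_geometric_of_lt_one (by norm_num) (by norm_num)]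
  norm_num

theorem one_lt_tsum_two_pow_div_three_pow {d : ℕ → ℕ} (hle : ∀ i, i ≤ d i) (hlt : ∃ j, j < d j)
    (hs : Summable fun i => (2 : ℝ) ^ d i / 3 ^ (i + 1)) :
    1 < ∑' i, (2 : ℝ) ^ d i / 3 ^ (i + 1) := by
  obtain ⟨j, hj⟩ := hlt
  rw [← tsum_two_pow_div_three_pow_succ]
  refine Summable.tsum_lt_tsum_of_nonneg (i := j) (fun i => by positivity) (fun i => ?_) ?_ hs
  · gcongr
    · norm_num
    · exact hle i
  · gcongr
    · norm_num

/-- If `v` is aperiodic with `liminf h(ℓ)/ℓ > log 2 / log 3`, then the series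
`Φ_ℝ(v)` converges and its sum is strictly less than `−1`. -/
theorem stmt11 (v : ℕ → Bool) (hv : ¬ EventuallyPeriodicWord v)
    (hlim : Real.log 2 / Real.log 3 <
      liminf (fun ℓ : ℕ => (heightOfPrefix v ℓ : ℝ) / ℓ) atTop) :
    ∃ ζ : ℝ, Tendsto (phiPartial v) atTop (nhds ζ) ∧ ζ < -1 := by
  have hinf := infinite_setOf_of_not_eventuallyPeriodicWord hv
  obtain ⟨c, hc, hc_lt⟩ := exists_between hlim
  have hheight : ∀ᶠ ℓ in atTop, c < (heightOfPrefix v ℓ : ℝ) / ℓ :=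
    eventually_lt_of_lt_liminf hc_lt (isBoundedUnder_of ⟨0, fun ℓ => by positivity⟩)
  have hs := summable_two_pow_div_three_pow hc (eventually_mul_onePos_le hinf hheight)
  refine ⟨-∑' i, (2 : ℝ) ^ onePos v i / 3 ^ (i + 1), hs.hasSum.tendsto_sum_nat.neg, ?_⟩
  linarith [one_lt_tsum_two_pow_div_three_pow (le_onePos hinf) (exists_lt_onePos hinf hv) hs]
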